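/- arXiv:1804.08017 — 2 statements merged into one kernel-verified Lean document; each statement's English description precedes it below -/
import Mathlib

section
/- Let n ≥ 1, let α_1,…,α_n ≥ 0 with ∑_j α_j = 1, let μ ≥ 1, and let β_j ∈ [1/μ, μ] for all j. Then ∑_{j=1}^n | α_j β_j / (∑_k α_k β_k) − α_j | ≤ 2(μ−1)/(μ+1). -/
/-!
With `S = ∑ αₖ βₖ` the `α`-mean of `β`, the sum is the mean absolute deviation `∑ αⱼ |βⱼ - S|`
divided by `S`. Bounding `|· - S|` on `[1/μ, μ]` by its chord bounds that deviation by
`2 (μ - S)(S - 1/μ)/(μ - 1/μ)`, and `(μ - S)(S - 1/μ)/S` is maximal at `S = 1`.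
-/

open Finset

section WeightedMean

variable {ι : Type*} {s : Finset ι} {w x : ι → ℝ} {a b : ℝ}

theorem sum_mul_mem_Icc_of_sum_eq_one (hw : ∀ i ∈ s, 0 ≤ w i) (hw1 : ∑ i ∈ s, w i = 1)
    (hx : ∀ i ∈ s, x i ∈ Set.Icc a b) : ∑ i ∈ s, w i * x i ∈ Set.Icc a b := by
  constructor
  · calc a = ∑ i ∈ s, w i * a := by rw [← sum_mul, hw1, one_mul]
      _ ≤ ∑ i ∈ s, w i * x i := sum_le_sum fun i hi => by gcongr; exacts [hw i hi, (hx i hi).1]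
  · calc ∑ i ∈ s, w i * x i ≤ ∑ i ∈ s, w i * b :=
          sum_le_sum fun i hi => by gcongr; exacts [hw i hi, (hx i hi).2]
      _ = b := by rw [← sum_mul, hw1, one_mul]

/-- On `[a, b]` the convex function `|· - m|` lies below its chord. -/
theorem mul_abs_sub_le_chord {x m : ℝ} (hx : x ∈ Set.Icc a b) (hm : m ∈ Set.Icc a b) :
    (b - a) * |x - m| ≤ (b - x) * (m - a) + (x - a) * (b - m) := by
  obtain ⟨hax, hxb⟩ := hx
  obtain ⟨ham, hmb⟩ := hm
  rcases le_total m x with h | h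
  · rw [abs_of_nonneg (sub_nonneg.2 h)]; nlinarith
  · rw [abs_of_nonpos (sub_nonpos.2 h)]; nlinarith

/-- Sharp: equality holds for the two-point law on `{a, b}`. -/
theorem sum_mul_abs_sub_weightedMean_le (hw : ∀ i ∈ s, 0 ≤ w i) (hw1 : ∑ i ∈ s, w i = 1)
    (hx : ∀ i ∈ s, x i ∈ Set.Icc a b) :
    ∑ i ∈ s, w i * |x i - ∑ j ∈ s, w j * x j| ≤
      2 * (b - ∑ j ∈ s, w j * x j) * (∑ j ∈ s, w j * x j - a) / (b - a) := by
  set m := ∑ j ∈ s, w j * x j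
  have hm : m ∈ Set.Icc a b := sum_mul_mem_Icc_of_sum_eq_one hw hw1 hx
  rcases (hm.1.trans hm.2).eq_or_lt with rfl | hab
  · have hxm : ∀ i ∈ s, x i = m := fun i hi => le_antisymm
      ((hx i hi).2.trans hm.1) (hm.2.trans (hx i hi).1)
    rw [sum_eq_zero fun i hi => by rw [hxm i hi, sub_self, abs_zero, mul_zero]]
    simp
  rw [le_div_iff₀ (sub_pos.2 hab), sum_mul]
  calc ∑ i ∈ s, w i * |x i - m| * (b - a)
      ≤ ∑ i ∈ s, w i * ((b - x i) * (m - a) + (x i - a) * (b - m)) := sum_le_sum fun i hi => by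
        rw [mul_assoc, mul_comm |x i - m|]
        exact mul_le_mul_of_nonneg_left (mul_abs_sub_le_chord (hx i hi) hm) (hw i hi)
    _ = ∑ i ∈ s, (w i * (b * (m - a) - a * (b - m)) + w i * x i * (b - m - (m - a))) :=
        sum_congr rfl fun i _ => by ring
    _ = 2 * (b - m) * (m - a) := by rw [sum_add_distrib, ← sum_mul, ← sum_mul, hw1]; ring

theorem sum_abs_mul_div_sub (hw : ∀ i ∈ s, 0 ≤ w i) {S : ℝ} (hS : 0 < S) :
    ∑ i ∈ s, |w i * x i / S - w i| = (∑ i ∈ s, w i * |x i - S|) / S := by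
  rw [sum_div]
  refine sum_congr rfl fun i hi => ?_
  rw [show w i * x i / S - w i = w i * (x i - S) / S by field_simp, abs_div, abs_mul,
    abs_of_nonneg (hw i hi), abs_of_pos hS]

end WeightedMean

/-- `(μ - S)(S - 1/μ)/S = (μ + 1/μ) - (S + 1/S)` is largest at `S = 1`. -/
theorem deviation_bound_div_le {μ S : ℝ} (hμ : 1 ≤ μ) (hS : 0 < S) :
    2 * (μ - S) * (S - 1 / μ) / (μ - 1 / μ) / S ≤ 2 * (μ - 1) / (μ + 1) := by
  have hμ0 : 0 < μ := by linarith
  rcases hμ.eq_or_lt with rfl | hμ1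
  · simp
  have hden : 0 < μ - 1 / μ := by
    rw [sub_pos, div_lt_iff₀ hμ0]; nlinarith
  rw [div_div, div_le_div_iff₀ (mul_pos hden hS) (by linarith)]
  have key : (μ - S) * (μ * S - 1) ≤ S * (μ - 1) ^ 2 := by nlinarith [sq_nonneg (S - 1)]
  have e1 : (μ - S) * (S - 1 / μ) = (μ - S) * (μ * S - 1) / μ := by field_simp
  have e2 : μ - 1 / μ = (μ - 1) * (μ + 1) / μ := by field_simp; ring
  rw [mul_assoc 2, e1, e2]
  field_simp
  nlinarith [key]

theorem stmt_4_general (n : ℕ) (α β : Fin n → ℝ)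
    (hα : ∀ j, 0 ≤ α j) (hsum : ∑ j, α j = 1)
    (μ : ℝ) (hμ : 1 ≤ μ) (hβ : ∀ j, β j ∈ Set.Icc (1 / μ) μ) :
    ∑ j, |α j * β j / (∑ k, α k * β k) - α j| ≤ 2 * (μ - 1) / (μ + 1) := by
  have hS := sum_mul_mem_Icc_of_sum_eq_one (fun j _ => hα j) hsum fun j _ => hβ j
  have hS0 : 0 < ∑ k, α k * β k := lt_of_lt_of_le (by positivity) hS.1
  rw [sum_abs_mul_div_sub (fun j _ => hα j) hS0]
  calc (∑ j, α j * |β j - ∑ k, α k * β k|) / ∑ k, α k * β k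
      ≤ 2 * (μ - ∑ k, α k * β k) * (∑ k, α k * β k - 1 / μ) / (μ - 1 / μ) / ∑ k, α k * β k :=
        div_le_div_of_nonneg_right
          (sum_mul_abs_sub_weightedMean_le (fun j _ => hα j) hsum fun j _ => hβ j) hS0.le
    _ ≤ 2 * (μ - 1) / (μ + 1) := deviation_bound_div_le hμ hS0

theorem stmt_4 (n : ℕ) (hn : 1 ≤ n) (α β : Fin n → ℝ)
    (hα : ∀ j, 0 ≤ α j) (hsum : ∑ j, α j = 1)
    (μ : ℝ) (hμ : 1 ≤ μ) (hβ : ∀ j, β j ∈ Set.Icc (1 / μ) μ) :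
    ∑ j, |α j * β j / (∑ k, α k * β k) - α j| ≤ 2 * (μ - 1) / (μ + 1) :=
  stmt_4_general n α β hα hsum μ hμ hβ
end

section
/- Let n ≥ 1, let α_1,…,α_n ≥ 0 with ∑_j α_j = 1, let μ ≥ 1, and let β_j ∈ [1/μ, μ]. Then there is a vector β' with each β'_j ∈ {μ, 1/μ} such that ∑_j |α_j β_j/(∑_k α_k β_k) − α_j| ≤ ∑_j |α_j β'_j/(∑_k α_k β'_k) − α_j|. -/
/-!
With `S = ∑ αₖ βₖ`, the perturbation `xⱼ = αⱼ βⱼ / S - αⱼ` sums to zero, so `2 ∑_{j ∈ T} xⱼ ≤ ∑ |xⱼ|`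
for every `T`, with equality for `T = {j | S ≤ βⱼ}`, the coordinates where `xⱼ ≥ 0`. Setting
`β' = μ` on this `T` and `β' = 1/μ` off it raises the weights inside `T` and lowers them outside,
which can only increase the share `∑_{j ∈ T} αⱼ βⱼ / S` of `T`, hence the sum over `T` of the
perturbation, and therefore the L1 perturbation itself.
-/

open Finset

section ZeroSum

variable {ι G : Type*} [Fintype ι]

lemma sum_sub_sum_compl_eq_two_nsmul_of_sum_eq_zero [DecidableEq ι] [AddCommGroup G] {x : ι → G}
    (hx : ∑ i, x i = 0) (T : Finset ι) :
    ∑ i ∈ T, x i - ∑ i ∈ Tᶜ, x i = 2 • ∑ i ∈ T, x i := by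
  rw [eq_neg_of_add_eq_zero_right ((sum_add_sum_compl T x).trans hx)]
  abel

variable [AddCommGroup G] [LinearOrder G] [IsOrderedAddMonoid G] {x : ι → G}

lemma two_nsmul_sum_le_sum_abs_of_sum_eq_zero (hx : ∑ i, x i = 0) (T : Finset ι) :
    2 • ∑ i ∈ T, x i ≤ ∑ i, |x i| := by
  classical
  rw [← sum_sub_sum_compl_eq_two_nsmul_of_sum_eq_zero hx, ← sum_add_sum_compl T, sub_eq_add_neg,
    ← sum_neg_distrib]
  exact add_le_add (sum_le_sum fun i _ => le_abs_self _) (sum_le_sum fun i _ => neg_le_abs _)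

lemma sum_abs_eq_two_nsmul_sum_of_sum_eq_zero (hx : ∑ i, x i = 0) {T : Finset ι}
    (hT : ∀ i ∈ T, 0 ≤ x i) (hTc : ∀ i ∉ T, x i ≤ 0) :
    ∑ i, |x i| = 2 • ∑ i ∈ T, x i := by
  classical
  rw [← sum_sub_sum_compl_eq_two_nsmul_of_sum_eq_zero hx, ← sum_add_sum_compl T, sub_eq_add_neg,
    ← sum_neg_distrib]
  congr 1
  · exact sum_congr rfl fun i hi => abs_of_nonneg (hT i hi)
  · exact sum_congr rfl fun i hi => abs_of_nonpos (hTc i (mem_compl.mp hi))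

end ZeroSum

section Reweighting

variable {ι : Type*} [Fintype ι] {α : ι → ℝ}

lemma le_sum_mul_of_forall_le (hα : ∀ j, 0 ≤ α j) (hsum : ∑ j, α j = 1) {γ : ι → ℝ} {c : ℝ}
    (hγ : ∀ j, c ≤ γ j) : c ≤ ∑ j, α j * γ j :=
  calc c = ∑ j, α j * c := by rw [← sum_mul, hsum, one_mul]
    _ ≤ ∑ j, α j * γ j := sum_le_sum fun j _ => mul_le_mul_of_nonneg_left (hγ j) (hα j)

lemma sum_mul_div_sub_eq_zero (hsum : ∑ j, α j = 1) {γ : ι → ℝ} (hγ : ∑ j, α j * γ j ≠ 0) :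
    ∑ j, (α j * γ j / ∑ k, α k * γ k - α j) = 0 := by
  rw [sum_sub_distrib, ← sum_div, div_self hγ, hsum, sub_self]

lemma div_add_le_div_add {x y x' y' : ℝ} (hx : x ≤ x') (hy : y' ≤ y) (hx' : 0 ≤ x') (hy' : 0 ≤ y')
    (hxy : 0 < x + y) (hxy' : 0 < x' + y') : x / (x + y) ≤ x' / (x' + y') := by
  rw [div_le_div_iff₀ hxy hxy']
  nlinarith [mul_le_mul_of_nonneg_right hx hy', mul_le_mul_of_nonneg_left hy hx']

lemma sum_mul_div_sum_mul_le (hα : ∀ j, 0 ≤ α j) (T : Finset ι) {γ γ' : ι → ℝ}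
    (hT : ∀ j ∈ T, γ j ≤ γ' j) (hTc : ∀ j ∉ T, γ' j ≤ γ j) (hγ' : ∀ j, 0 ≤ γ' j)
    (hS : 0 < ∑ j, α j * γ j) (hS' : 0 < ∑ j, α j * γ' j) :
    (∑ j ∈ T, α j * γ j) / ∑ j, α j * γ j ≤ (∑ j ∈ T, α j * γ' j) / ∑ j, α j * γ' j := by
  classical
  rw [← sum_add_sum_compl T] at hS ⊢
  rw [← sum_add_sum_compl T (fun j => α j * γ' j)] at hS' ⊢
  exact div_add_le_div_add
    (sum_le_sum fun j hj => mul_le_mul_of_nonneg_left (hT j hj) (hα j))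
    (sum_le_sum fun j hj => mul_le_mul_of_nonneg_left (hTc j (mem_compl.mp hj)) (hα j))
    (sum_nonneg fun j _ => mul_nonneg (hα j) (hγ' j))
    (sum_nonneg fun j _ => mul_nonneg (hα j) (hγ' j)) hS hS'

end Reweighting

theorem stmt_5_general (n : ℕ) (α β : Fin n → ℝ)
    (hα : ∀ j, 0 ≤ α j) (hsum : ∑ j, α j = 1)
    (μ : ℝ) (hμ : 1 ≤ μ) (hβ : ∀ j, β j ∈ Set.Icc (1 / μ) μ) :
    ∃ β' : Fin n → ℝ, (∀ j, β' j = μ ∨ β' j = 1 / μ) ∧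
      ∑ j, |α j * β j / (∑ k, α k * β k) - α j|
        ≤ ∑ j, |α j * β' j / (∑ k, α k * β' k) - α j| := by
  have hμ₀ : 0 < 1 / μ := by positivity
  set S := ∑ k, α k * β k
  have hS : 0 < S := hμ₀.trans_le (le_sum_mul_of_forall_le hα hsum fun j => (hβ j).1)
  classical
  set T := univ.filter fun j => S ≤ β j
  set β' : Fin n → ℝ := fun j => if j ∈ T then μ else 1 / μ
  have hβ'_ge : ∀ j, 1 / μ ≤ β' j := fun j => by
    by_cases hj : j ∈ T
    · simp only [β', if_pos hj]
      exact (div_le_one₀ (by linarith)).mpr hμ |>.trans hμ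
    · simp only [β', if_neg hj, le_refl]
  have hS' : 0 < ∑ k, α k * β' k := hμ₀.trans_le (le_sum_mul_of_forall_le hα hsum hβ'_ge)
  refine ⟨β', fun j => by by_cases hj : j ∈ T <;> simp [β', hj], ?_⟩
  calc ∑ j, |α j * β j / S - α j|
      = 2 • ∑ j ∈ T, (α j * β j / S - α j) := by
        refine sum_abs_eq_two_nsmul_sum_of_sum_eq_zero (sum_mul_div_sub_eq_zero hsum hS.ne')
          (fun j hj => ?_) (fun j hj => ?_)
        · rw [sub_nonneg, le_div_iff₀ hS]
          exact mul_le_mul_of_nonneg_left (mem_filter.mp hj).2 (hα j)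
        · rw [sub_nonpos, div_le_iff₀ hS]
          exact mul_le_mul_of_nonneg_left (not_le.mp (by simpa [T] using hj)).le (hα j)
    _ ≤ 2 • ∑ j ∈ T, (α j * β' j / ∑ k, α k * β' k - α j) := by
        simp only [sum_sub_distrib, ← sum_div]
        gcongr 2 • (?_ - _)
        exact sum_mul_div_sum_mul_le hα T (fun j hj => by simpa [β', hj] using (hβ j).2)
          (fun j hj => by simpa [β', hj] using (hβ j).1) (fun j => hμ₀.le.trans (hβ'_ge j)) hS hS'
    _ ≤ _ := two_nsmul_sum_le_sum_abs_of_sum_eq_zero (sum_mul_div_sub_eq_zero hsum hS'.ne') T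

theorem stmt_5 (n : ℕ) (hn : 1 ≤ n) (α β : Fin n → ℝ)
    (hα : ∀ j, 0 ≤ α j) (hsum : ∑ j, α j = 1)
    (μ : ℝ) (hμ : 1 ≤ μ) (hβ : ∀ j, β j ∈ Set.Icc (1 / μ) μ) :
    ∃ β' : Fin n → ℝ, (∀ j, β' j = μ ∨ β' j = 1 / μ) ∧
      ∑ j, |α j * β j / (∑ k, α k * β k) - α j|
        ≤ ∑ j, |α j * β' j / (∑ k, α k * β' k) - α j| :=
  stmt_5_general n α β hα hsum μ hμ hβ
end
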